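/- For every M > 0 there exists r₀ > 1 such that for all r > r₀ and all λ with 0 < λ < 1/r, the ratio of the TAGS lower bound λ·r to the SITA upper bound λ(√r - 1)²/(√r(1 - 1/r)²) exceeds M. -/

import Mathlib

/-!
With `s = √r`, the factor `λ` cancels and `r (1 - 1/r)² = (s - 1)² (s + 1)² / s²`, so the ratio
is exactly `(s + 1)² / s`, which exceeds `s = √r` and is therefore unbounded as `r → ∞`.
-/

open Real

lemma tags_sita_ratio_eq {lam r : ℝ} (hlam : lam ≠ 0) (hr₀ : 0 < r) (hr₁ : r ≠ 1) :
    (lam * r) / (lam * (√r - 1) ^ 2 / (√r * (1 - 1 / r) ^ 2)) = (√r + 1) ^ 2 / √r := by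
  have hs : 0 < √r := sqrt_pos.mpr hr₀
  have hs₁ : √r - 1 ≠ 0 := sub_ne_zero.mpr fun h => hr₁ (by rw [← sq_sqrt hr₀.le, h, one_pow])
  have hr : r = √r ^ 2 := (sq_sqrt hr₀.le).symm
  generalize √r = s at hs hs₁ hr ⊢
  subst hr
  field_simp
  ring

lemma lt_add_one_sq_div_self {s : ℝ} (hs : 0 < s) : s < (s + 1) ^ 2 / s := by
  rw [lt_div_iff₀ hs]
  nlinarith

theorem stmt19 :
    ∀ M : ℝ, 0 < M → ∃ r₀ : ℝ, 1 < r₀ ∧ ∀ r : ℝ, r₀ < r → ∀ lam : ℝ,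
      0 < lam → lam < 1 / r →
      (lam * r) / (lam * (Real.sqrt r - 1)^2 / (Real.sqrt r * (1 - 1/r)^2)) > M := by
  intro M hM
  refine ⟨M ^ 2 + 1, by nlinarith, fun r hr lam hlam _ => ?_⟩
  have hr₁ : 1 < r := by nlinarith
  have hM_lt : M < √r := lt_sqrt hM.le |>.mpr (by linarith)
  rw [gt_iff_lt, tags_sita_ratio_eq hlam.ne' (by linarith) hr₁.ne']
  exact hM_lt.trans (lt_add_one_sq_div_self (hM.trans hM_lt))
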